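/- Let Ω ⊆ ℂ be an open set, let K, L, T be compact subsets of the closure Ω̄, and let F ⊆ ℕ×ℕ contain a sequence (p̃_n, q̃_n) with p̃_n → +∞. Then for every complex polynomial P, every ε > 0 and every N ∈ ℕ, there exist (p,q) ∈ F and a complex polynomial g such that: sup_{z∈T} |g^{(l)}(z) − P^{(l)}(z)| < ε for all l = 0, 1, …, N; g ∈ D_{p,q}(ζ) for every ζ ∈ L; and the Padé approximant [p/q]_{g,ζ} is identically equal to g for every ζ ∈ L. -/

import Mathlib

open Filter

noncomputable def taylorCoeff (f : ℂ → ℂ) (ζ : ℂ) (v : ℕ) : ℂ :=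
  iteratedDeriv v f ζ / (Nat.factorial v : ℂ)

noncomputable def coeffZ (a : ℕ → ℂ) (k : ℤ) : ℂ :=
  if 0 ≤ k then a k.toNat else 0

/-- The q×q Hankel matrix with (i,j) entry `a (p-q+1+i+j)` (value 0 for negative index). -/
noncomputable def hankel (a : ℕ → ℂ) (p q : ℕ) : Matrix (Fin q) (Fin q) ℂ :=
  Matrix.of fun i j => coeffZ a ((p : ℤ) - (q : ℤ) + 1 + (i.1 : ℤ) + (j.1 : ℤ))

/-- `f ∈ D_{p,q}(ζ)` for the coefficient sequence `a` of `f` at `ζ`: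
either `q = 0` or the Hankel determinant is nonzero. -/
def MemD (a : ℕ → ℂ) (p q : ℕ) : Prop :=
  q = 0 ∨ (hankel a p q).det ≠ 0

/-- `Nu/De` (in the variable `w = z - ζ`) is a Padé approximant `[p/q]` of the series with
coefficients `a` : `deg Nu ≤ p`, `deg De ≤ q`, `De(0) = 1`, and the power series
`De(w)·Σ a_v w^v − Nu(w)` has vanishing coefficients in degrees `0,…,p+q`. -/
def IsPadeAt (a : ℕ → ℂ) (p q : ℕ) (Nu De : Polynomial ℂ) : Prop :=
  Nu.natDegree ≤ p ∧ De.natDegree ≤ q ∧ De.coeff 0 = 1 ∧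
    ∀ k ≤ p + q, (∑ i ∈ Finset.range (k + 1), De.coeff i * a (k - i)) = Nu.coeff k

/-! Add to `P` a monomial `c X^p` with `p > deg P` and `c ≠ 0` so small that the first `N`
derivatives barely move on `T`. Then `g` has degree exactly `p`, so at every `ζ` its Taylor
coefficients vanish beyond `p` and the `p`-th one is `c`: the Hankel matrix is triangular up to
reversing its columns, with `c` on the diagonal, and the Taylor polynomial of `g` over the
denominator `1` satisfies the Padé conditions. -/

open Polynomial

theorem Polynomial.iteratedDeriv_eval {𝕜 : Type*} [NontriviallyNormedField 𝕜] (g : 𝕜[X])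
    (n : ℕ) (z : 𝕜) :
    iteratedDeriv n (fun w => g.eval w) z = (derivative^[n] g).eval z := by
  induction n generalizing z with
  | zero => simp
  | succ n ih =>
    rw [iteratedDeriv_succ, _root_.funext ih, Function.iterate_succ_apply']
    exact Polynomial.deriv _

theorem taylorCoeff_eval (g : ℂ[X]) (ζ : ℂ) (k : ℕ) :
    taylorCoeff (fun w => g.eval w) ζ k = (taylor ζ g).coeff k := by
  simp only [taylorCoeff, iteratedDeriv_eval]
  rw [taylor_coeff, ← factorial_smul_hasseDeriv, LinearMap.smul_apply, nsmul_eq_mul, eval_mul,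
    eval_natCast,
    mul_div_cancel_left₀ _ (Nat.cast_ne_zero.mpr (Nat.factorial_ne_zero k))]

theorem coeffZ_natCast (a : ℕ → ℂ) (n : ℕ) : coeffZ a n = a n := by
  simp [coeffZ]

theorem hankel_submatrix_revPerm_apply (a : ℕ → ℂ) (p q : ℕ) (i j : Fin q) :
    (hankel a p q).submatrix id Fin.revPerm i j = coeffZ a (p + i - j) := by
  simp only [hankel, Matrix.submatrix_apply, Matrix.of_apply, id_eq, Fin.revPerm_apply,
    Fin.val_rev]
  congr 1
  omega

theorem hankel_det_ne_zero {a : ℕ → ℂ} {p : ℕ} (ha : ∀ k, p < k → a k = 0) (hp : a p ≠ 0)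
    (q : ℕ) : (hankel a p q).det ≠ 0 := by
  have htri : ((hankel a p q).submatrix id Fin.revPerm).BlockTriangular id := by
    intro i j (hji : j < i)
    rw [hankel_submatrix_revPerm_apply,
      show (p + i - j : ℤ) = ((p + (i - j : ℕ) : ℕ) : ℤ) by omega, coeffZ_natCast]
    exact ha _ (by omega)
  have hdet : ((hankel a p q).submatrix id Fin.revPerm).det = a p ^ q := by
    simp only [Matrix.det_of_isUpperTriangular htri, hankel_submatrix_revPerm_apply,
      add_sub_cancel_right, coeffZ_natCast, Finset.prod_const, Finset.card_univ, Fintype.card_fin]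
  intro h
  rw [Matrix.det_permute', h, mul_zero] at hdet
  exact pow_ne_zero q hp hdet.symm

theorem memD_taylorCoeff_eval {g : ℂ[X]} (hg : g ≠ 0) (ζ : ℂ) (q : ℕ) :
    MemD (taylorCoeff (fun w => g.eval w) ζ) g.natDegree q := by
  refine Or.inr (hankel_det_ne_zero (fun k hk => ?_) ?_ q)
  · rw [taylorCoeff_eval]
    exact coeff_eq_zero_of_natDegree_lt (by rwa [natDegree_taylor])
  · rw [taylorCoeff_eval, ← natDegree_taylor g ζ, coeff_natDegree, leadingCoeff_ne_zero]
    exact fun h => hg (by simpa using congrArg (taylor (-ζ)) h)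

theorem isPadeAt_taylor_one {g : ℂ[X]} {p : ℕ} (hg : g.natDegree ≤ p) (ζ : ℂ) (q : ℕ) :
    IsPadeAt (taylorCoeff (fun w => g.eval w) ζ) p q (taylor ζ g) 1 := by
  refine ⟨by rwa [natDegree_taylor], by simp, by simp, fun k _ => ?_⟩
  rw [Finset.sum_eq_single_of_mem 0 (by simp) (fun i _ hi => by simp [coeff_one, hi])]
  simp [taylorCoeff_eval]

theorem exists_ne_zero_norm_mul_eval_iterate_derivative_lt (Q : ℂ[X]) {T : Set ℂ}
    (hT : IsCompact T) (N : ℕ) {ε : ℝ} (hε : 0 < ε) :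
    ∃ c : ℂ, c ≠ 0 ∧ ∀ l ≤ N, ∀ z ∈ T, ‖c * (derivative^[l] Q).eval z‖ < ε := by
  let bound z := ∑ l ∈ Finset.range (N + 1), ‖(derivative^[l] Q).eval z‖
  obtain ⟨B, hB⟩ := hT.exists_bound_of_continuousOn (f := bound) (by fun_prop)
  refine ⟨(ε / (|B| + 1) : ℝ), by exact_mod_cast (by positivity : ε / (|B| + 1) ≠ 0), ?_⟩
  intro l hl z hz
  have hterm : ‖(derivative^[l] Q).eval z‖ ≤ |B| :=
    calc _ ≤ bound z := Finset.single_le_sum (f := fun l => ‖(derivative^[l] Q).eval z‖)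
            (fun _ _ => norm_nonneg _) (Finset.mem_range.mpr (Nat.lt_succ_of_le hl))
      _ ≤ ‖bound z‖ := Real.le_norm_self _
      _ ≤ |B| := (hB z hz).trans (le_abs_self B)
  rw [norm_mul, Complex.norm_real, Real.norm_of_nonneg (by positivity)]
  calc ε / (|B| + 1) * ‖(derivative^[l] Q).eval z‖ ≤ ε / (|B| + 1) * |B| := by gcongr
    _ < ε := by
      rw [div_mul_eq_mul_div, div_lt_iff₀ (by positivity)]
      nlinarith [abs_nonneg B]

theorem stmt10_general (L T : Set ℂ)
    (hTc : IsCompact T)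
    (F : Set (ℕ × ℕ))
    (hF : ∃ t : ℕ → ℕ × ℕ, (∀ n, t n ∈ F) ∧ Tendsto (fun n => (t n).1) atTop atTop)
    (P : Polynomial ℂ) (ε : ℝ) (hε : 0 < ε) (N : ℕ) :
    ∃ pq ∈ F, ∃ g : Polynomial ℂ,
      (∀ l ≤ N, ∀ z ∈ T,
        ‖iteratedDeriv l (fun w => Polynomial.eval w g) z -
          iteratedDeriv l (fun w => Polynomial.eval w P) z‖ < ε) ∧
      ∀ ζ ∈ L, MemD (taylorCoeff (fun w => Polynomial.eval w g) ζ) pq.1 pq.2 ∧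
        ∃ Nu De : Polynomial ℂ,
          IsPadeAt (taylorCoeff (fun w => Polynomial.eval w g) ζ) pq.1 pq.2 Nu De ∧
          ∀ z : ℂ, Polynomial.eval (z - ζ) De ≠ 0 ∧
            Polynomial.eval (z - ζ) Nu / Polynomial.eval (z - ζ) De = Polynomial.eval z g := by
  obtain ⟨t, htF, htop⟩ := hF
  obtain ⟨n, hn⟩ := (htop.eventually_gt_atTop P.natDegree).exists
  obtain ⟨c, hc, hsmall⟩ :=
    exists_ne_zero_norm_mul_eval_iterate_derivative_lt (X ^ (t n).1) hTc N hε
  set g := P + C c * X ^ (t n).1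
  have hdeg : g.natDegree = (t n).1 := by
    rw [natDegree_add_eq_right_of_natDegree_lt, natDegree_C_mul_X_pow _ _ hc]
    rwa [natDegree_C_mul_X_pow _ _ hc]
  have hg : g ≠ 0 := fun h => by rw [h, natDegree_zero] at hdeg; omega
  refine ⟨t n, htF n, g, fun l hl z hz => ?_, fun ζ _ => ⟨hdeg ▸ memD_taylorCoeff_eval hg ζ _,
    taylor ζ g, 1, isPadeAt_taylor_one hdeg.le ζ _, fun z => by simp [taylor_eval]⟩⟩
  rw [iteratedDeriv_eval, iteratedDeriv_eval, iterate_map_add, iterate_derivative_C_mul, eval_add,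
    eval_mul, eval_C, add_sub_cancel_left]
  exact hsmall l hl z hz

theorem stmt10 (Ω : Set ℂ) (hΩ : IsOpen Ω) (K L T : Set ℂ)
    (hK : K ⊆ closure Ω) (hKc : IsCompact K) (hL : L ⊆ closure Ω) (hLc : IsCompact L)
    (hT : T ⊆ closure Ω) (hTc : IsCompact T)
    (F : Set (ℕ × ℕ))
    (hF : ∃ t : ℕ → ℕ × ℕ, (∀ n, t n ∈ F) ∧ Tendsto (fun n => (t n).1) atTop atTop)
    (P : Polynomial ℂ) (ε : ℝ) (hε : 0 < ε) (N : ℕ) :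
    ∃ pq ∈ F, ∃ g : Polynomial ℂ,
      (∀ l ≤ N, ∀ z ∈ T,
        ‖iteratedDeriv l (fun w => Polynomial.eval w g) z -
          iteratedDeriv l (fun w => Polynomial.eval w P) z‖ < ε) ∧
      ∀ ζ ∈ L, MemD (taylorCoeff (fun w => Polynomial.eval w g) ζ) pq.1 pq.2 ∧
        ∃ Nu De : Polynomial ℂ,
          IsPadeAt (taylorCoeff (fun w => Polynomial.eval w g) ζ) pq.1 pq.2 Nu De ∧
          ∀ z : ℂ, Polynomial.eval (z - ζ) De ≠ 0 ∧
            Polynomial.eval (z - ζ) Nu / Polynomial.eval (z - ζ) De = Polynomial.eval z g :=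
  stmt10_general L T hTc F hF P ε hε N
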